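/- Let G be the bipartite point–line incidence graph whose parts are the points of F_q^3 and the affine lines of F_q^3, with an edge between a point x and a line ℓ exactly when x ∈ ℓ. Then the second largest normalized singular value of G is at most 2/√q. -/
import Mathlib


attribute [local instance] Classical.propDecidable

instance affineSubspace_finite {F : Type} [Field F] [Fintype F] {n : ℕ} :
    Finite (AffineSubspace F (Fin n → F)) :=
  Finite.of_injective (fun C => (C : Set (Fin n → F))) SetLike.coe_injective

/-- The second largest normalized singular value of a bi-regular bipartite incidence graph with
parts `A`, `B` and incidence relation `E`: the normalized adjacency matrix `M` (with entries
`1/√(deg a · deg b)` on edges, which is `1/√(d_A·d_B)` for a bi-regular graph) has top singular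
value `1` attained on the normalized all-ones vectors, so the second largest singular value is
the operator norm of `M` minus its top rank-one component, whose entries are all
`1/√(|A|·|B|)`. -/
noncomputable def lambdaInc (A B : Type) [Fintype A] [Fintype B] (E : A → B → Prop) : ℝ :=
  ‖LinearMap.toContinuousLinearMap (Matrix.toEuclideanLin
    (Matrix.of fun (a : A) (b : B) =>
      (if E a b then
        1 / Real.sqrt ((Nat.card {b' : B // E a b'} : ℝ) * (Nat.card {a' : A // E a' b} : ℝ))
      else 0) - 1 / Real.sqrt ((Fintype.card A : ℝ) * (Fintype.card B : ℝ))))‖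

/-- A line: a 1-dimensional affine subspace of `F^n`. -/
def IsLine (F : Type) [Field F] [Fintype F] (n : ℕ) (ℓ : AffineSubspace F (Fin n → F)) : Prop :=
  (ℓ : Set (Fin n → F)).Nonempty ∧ Module.finrank F ℓ.direction = 1

noncomputable instance {F : Type} [Field F] [Fintype F] :
    Fintype {ℓ : AffineSubspace F (Fin 3 → F) // IsLine F 3 ℓ} :=
  Fintype.ofFinite _

section Aux

variable {F : Type} [Field F] [Fintype F]

open Module

/-- Each line has exactly `q` points. -/
lemma line_card (ℓ : AffineSubspace F (Fin 3 → F)) (h : IsLine F 3 ℓ) :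
    Nat.card {x : Fin 3 → F // x ∈ ℓ} = Fintype.card F := by
  obtain ⟨⟨x₀, hx₀⟩, hdim⟩ := h
  have e : ℓ.direction ≃ {x : Fin 3 → F // x ∈ ℓ} :=
  { toFun := fun v => ⟨v.1 +ᵥ x₀, AffineSubspace.vadd_mem_of_mem_direction v.2 hx₀⟩
    invFun := fun p => ⟨p.1 -ᵥ x₀, AffineSubspace.vsub_mem_direction p.2 hx₀⟩
    left_inv := fun v => by ext; simp
    right_inv := fun p => by ext; simp }
  rw [← Nat.card_congr e]
  have : Fintype ℓ.direction := Fintype.ofFinite _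
  rw [Nat.card_eq_fintype_card, card_eq_pow_finrank (K := F), hdim, pow_one]

/-- Through two distinct points there is a unique line. -/
lemma unique_line {x y : Fin 3 → F} (hxy : x ≠ y) :
    ∃! ℓ : {ℓ : AffineSubspace F (Fin 3 → F) // IsLine F 3 ℓ}, x ∈ ℓ.1 ∧ y ∈ ℓ.1 := by
  have hv : y - x ≠ 0 := sub_ne_zero.2 (Ne.symm hxy)
  have hdir : ∀ ℓ : AffineSubspace F (Fin 3 → F), IsLine F 3 ℓ → x ∈ ℓ → y ∈ ℓ →
      ℓ.direction = Submodule.span F {y - x} := by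
    intro ℓ hℓ hx hy
    have hmem : y - x ∈ ℓ.direction := AffineSubspace.vsub_mem_direction hy hx
    have hle : Submodule.span F {y - x} ≤ ℓ.direction := by
      rwa [Submodule.span_singleton_le_iff_mem]
    exact (Submodule.eq_of_le_of_finrank_le hle
      (by rw [hℓ.2, finrank_span_singleton hv])).symm
  refine ⟨⟨AffineSubspace.mk' x (Submodule.span F {y - x}), ?_, ?_⟩, ⟨?_, ?_⟩, ?_⟩
  · exact ⟨x, AffineSubspace.self_mem_mk' _ _⟩
  · rw [AffineSubspace.direction_mk', finrank_span_singleton hv]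
  · exact AffineSubspace.self_mem_mk' _ _
  · have : (y - x) +ᵥ x ∈ AffineSubspace.mk' x (Submodule.span F {y - x}) :=
      AffineSubspace.vadd_mem_mk' x (Submodule.mem_span_singleton_self _)
    simpa using this
  · rintro ⟨ℓ, hℓ⟩ ⟨hx, hy⟩
    have h1 := hdir ℓ hℓ hx hy
    apply Subtype.ext
    apply AffineSubspace.ext_of_direction_eq
    · rw [h1, AffineSubspace.direction_mk']
    · exact ⟨x, hx, AffineSubspace.self_mem_mk' _ _⟩

lemma sum_boole_nat_card {α : Type*} [Fintype α] (p : α → Prop) [DecidablePred p] :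
    (∑ a : α, if p a then 1 else 0 : ℕ) = Nat.card {a // p a} := by
  rw [Nat.card_eq_fintype_card, Fintype.card_subtype, Finset.sum_boole]
  simp

lemma nat_card_ne {α : Type*} [Fintype α] (a : α) :
    Nat.card {b : α // b ≠ a} = Fintype.card α - 1 := by
  rw [Nat.card_eq_fintype_card]
  have := Fintype.card_subtype_compl (fun b : α => b = a)
  simpa [Fintype.card_subtype_eq] using this

lemma nat_card_one {α : Type*} (p : α → Prop) (h : ∃! a, p a) :
    Nat.card {a // p a} = 1 := by
  rw [Nat.card_eq_one_iff_unique]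
  obtain ⟨a, ha, hu⟩ := h
  exact ⟨⟨fun b c => Subtype.ext ((hu b.1 b.2).trans (hu c.1 c.2).symm)⟩, ⟨⟨a, ha⟩⟩⟩

lemma line_card_sub (ℓ : AffineSubspace F (Fin 3 → F)) (h : IsLine F 3 ℓ) {x : Fin 3 → F}
    (hx : x ∈ ℓ) :
    Nat.card {y : Fin 3 → F // y ∈ ℓ ∧ y ≠ x} = Fintype.card F - 1 := by
  have e : {y : Fin 3 → F // y ∈ ℓ ∧ y ≠ x} ≃
      {p : {y : Fin 3 → F // y ∈ ℓ} // p ≠ (⟨x, hx⟩ : {y : Fin 3 → F // y ∈ ℓ})} :=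
    { toFun := fun y => ⟨⟨y.1, y.2.1⟩, by simp [Subtype.ext_iff, y.2.2]⟩
      invFun := fun p => ⟨p.1.1, p.1.2, by simpa [Subtype.ext_iff] using p.2⟩
      left_inv := fun y => rfl
      right_inv := fun p => rfl }
  rw [Nat.card_congr e, nat_card_ne, ← Nat.card_eq_fintype_card, line_card ℓ h]

lemma lines_through (x : Fin 3 → F) :
    Nat.card {ℓ : {ℓ : AffineSubspace F (Fin 3 → F) // IsLine F 3 ℓ} // x ∈ ℓ.1} =
      Fintype.card F ^ 2 + Fintype.card F + 1 := by
  classical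
  set q := Fintype.card F with hq
  have hq2 : 2 ≤ q := Fintype.one_lt_card
  have hcardV : Fintype.card (Fin 3 → F) = q ^ 3 := by simp [hq]
  have key : ∑ ℓ : {ℓ : AffineSubspace F (Fin 3 → F) // IsLine F 3 ℓ}, ∑ y : Fin 3 → F,
      (if x ∈ ℓ.1 ∧ y ∈ ℓ.1 ∧ y ≠ x then 1 else 0 : ℕ) =
      ∑ y : Fin 3 → F, ∑ ℓ : {ℓ : AffineSubspace F (Fin 3 → F) // IsLine F 3 ℓ},
      (if x ∈ ℓ.1 ∧ y ∈ ℓ.1 ∧ y ≠ x then 1 else 0 : ℕ) := Finset.sum_comm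
  have hA : ∀ ℓ : {ℓ : AffineSubspace F (Fin 3 → F) // IsLine F 3 ℓ},
      (∑ y : Fin 3 → F, (if x ∈ ℓ.1 ∧ y ∈ ℓ.1 ∧ y ≠ x then 1 else 0 : ℕ)) =
      if x ∈ ℓ.1 then q - 1 else 0 := by
    intro ℓ
    rw [sum_boole_nat_card]
    by_cases hx : x ∈ ℓ.1
    · rw [if_pos hx, ← line_card_sub ℓ.1 ℓ.2 hx]
      exact Nat.card_congr (Equiv.subtypeEquivRight (by tauto))
    · rw [if_neg hx]
      have : IsEmpty {y : Fin 3 → F // x ∈ ℓ.1 ∧ y ∈ ℓ.1 ∧ y ≠ x} := ⟨fun y => hx y.2.1⟩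
      simp
  have hB : ∀ y : Fin 3 → F,
      (∑ ℓ : {ℓ : AffineSubspace F (Fin 3 → F) // IsLine F 3 ℓ},
        (if x ∈ ℓ.1 ∧ y ∈ ℓ.1 ∧ y ≠ x then 1 else 0 : ℕ)) = if y ≠ x then 1 else 0 := by
    intro y
    rw [sum_boole_nat_card]
    by_cases hy : y ≠ x
    · rw [if_pos hy]
      have h1 : Nat.card {ℓ : {ℓ : AffineSubspace F (Fin 3 → F) // IsLine F 3 ℓ} //
          x ∈ ℓ.1 ∧ y ∈ ℓ.1} = 1 := nat_card_one _ (unique_line (Ne.symm hy))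
      rw [← h1]
      exact Nat.card_congr (Equiv.subtypeEquivRight (by tauto))
    · rw [if_neg hy]
      have : IsEmpty {ℓ : {ℓ : AffineSubspace F (Fin 3 → F) // IsLine F 3 ℓ} //
          x ∈ ℓ.1 ∧ y ∈ ℓ.1 ∧ y ≠ x} := ⟨fun ℓ => hy ℓ.2.2.2⟩
      simp
  simp only [hA] at key
  simp only [hB] at key
  have e1 : (∑ ℓ : {ℓ : AffineSubspace F (Fin 3 → F) // IsLine F 3 ℓ},
      if x ∈ ℓ.1 then q - 1 else 0) =
      (q - 1) * Nat.card {ℓ : {ℓ : AffineSubspace F (Fin 3 → F) // IsLine F 3 ℓ} // x ∈ ℓ.1} := by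
    rw [← sum_boole_nat_card, Finset.mul_sum]
    exact Finset.sum_congr rfl fun ℓ _ => by simp [mul_ite]
  have e2 : (∑ y : Fin 3 → F, if y ≠ x then 1 else 0) = q ^ 3 - 1 := by
    rw [sum_boole_nat_card, nat_card_ne, hcardV]
  rw [e1, e2] at key
  obtain ⟨k, hk⟩ : ∃ k, q = k + 1 := ⟨q - 1, by omega⟩
  have hfact : (q - 1) * (q ^ 2 + q + 1) = q ^ 3 - 1 := by
    rw [hk]
    have h3 : (k + 1) ^ 3 = (k ^ 3 + 3 * k ^ 2 + 3 * k) + 1 := by ring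
    simp only [Nat.add_sub_cancel, h3]
    ring
  rw [← hfact] at key
  exact Nat.eq_of_mul_eq_mul_left (by omega) key

lemma card_lines :
    Fintype.card {ℓ : AffineSubspace F (Fin 3 → F) // IsLine F 3 ℓ} =
      Fintype.card F ^ 2 * (Fintype.card F ^ 2 + Fintype.card F + 1) := by
  classical
  set q := Fintype.card F with hq
  have hq2 : 2 ≤ q := Fintype.one_lt_card
  have key : ∑ ℓ : {ℓ : AffineSubspace F (Fin 3 → F) // IsLine F 3 ℓ}, ∑ x : Fin 3 → F,
      (if x ∈ ℓ.1 then 1 else 0 : ℕ) =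
      ∑ x : Fin 3 → F, ∑ ℓ : {ℓ : AffineSubspace F (Fin 3 → F) // IsLine F 3 ℓ},
      (if x ∈ ℓ.1 then 1 else 0 : ℕ) := Finset.sum_comm
  have hA : ∀ ℓ : {ℓ : AffineSubspace F (Fin 3 → F) // IsLine F 3 ℓ},
      (∑ x : Fin 3 → F, (if x ∈ ℓ.1 then 1 else 0 : ℕ)) = q := by
    intro ℓ
    rw [sum_boole_nat_card, line_card ℓ.1 ℓ.2]
  have hB : ∀ x : Fin 3 → F,
      (∑ ℓ : {ℓ : AffineSubspace F (Fin 3 → F) // IsLine F 3 ℓ},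
        (if x ∈ ℓ.1 then 1 else 0 : ℕ)) = q ^ 2 + q + 1 := by
    intro x
    rw [sum_boole_nat_card, lines_through]
  simp only [hA] at key
  simp only [hB] at key
  rw [Finset.sum_const, Finset.sum_const, smul_eq_mul, smul_eq_mul] at key
  have hcardV : Fintype.card (Fin 3 → F) = q ^ 3 := by simp [hq]
  rw [Finset.card_univ, Finset.card_univ, hcardV] at key
  have : q ^ 3 * (q ^ 2 + q + 1) = (q ^ 2 * (q ^ 2 + q + 1)) * q := by ring
  rw [this] at key
  exact Nat.eq_of_mul_eq_mul_right (by omega) key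

open scoped Matrix.Norms.L2Operator in
lemma norm_one_matrix (n : Type) [Fintype n] [DecidableEq n] [Nonempty n] :
    ‖(1 : Matrix n n ℝ)‖ = 1 := by
  rw [Matrix.cstar_norm_def, map_one]
  exact ContinuousLinearMap.norm_id

open Matrix in
open scoped Matrix.Norms.L2Operator in
lemma norm_J_le (n : Type) [Fintype n] [DecidableEq n] [Nonempty n] :
    ‖(Matrix.of fun _ _ => (1 : ℝ) : Matrix n n ℝ)‖ ≤ Fintype.card n := by
  set u : Matrix n (Fin 1) ℝ := Matrix.of fun _ _ => 1 with hu
  have hJ : (Matrix.of fun _ _ => (1 : ℝ) : Matrix n n ℝ) = u * uᴴ := by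
    ext i j
    simp [hu, Matrix.mul_apply]
  have huu : uᴴ * u = (Fintype.card n : ℝ) • (1 : Matrix (Fin 1) (Fin 1) ℝ) := by
    ext i j
    simp [hu, Matrix.mul_apply, Fin.eq_zero i, Fin.eq_zero j, Matrix.one_apply]
  have h1 : ‖u‖ * ‖u‖ = (Fintype.card n : ℝ) := by
    rw [← Matrix.l2_opNorm_conjTranspose_mul_self, huu, norm_smul, norm_one_matrix,
      mul_one, Real.norm_natCast]
  rw [hJ]
  calc ‖u * uᴴ‖ ≤ ‖u‖ * ‖uᴴ‖ := Matrix.l2_opNorm_mul u uᴴ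
    _ = (Fintype.card n : ℝ) := by rw [Matrix.l2_opNorm_conjTranspose, h1]

lemma sum_ite_real {α : Type*} [Fintype α] (p : α → Prop) [DecidablePred p] (c : ℝ) :
    (∑ a : α, if p a then c else 0) = (Nat.card {a // p a} : ℝ) * c := by
  have : (∑ a : α, if p a then c else 0) = (∑ a : α, if p a then (1 : ℝ) else 0) * c := by
    rw [Finset.sum_mul]
    exact Finset.sum_congr rfl fun a _ => by by_cases h : p a <;> simp [h]
  rw [this, Finset.sum_boole, Nat.card_eq_fintype_card, Fintype.card_subtype]


end Aux

open Matrix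
open scoped Matrix.Norms.L2Operator

/-- The point–line incidence graph of `F_q^3` has second largest normalized
singular value at most `2/√q`. -/
theorem point_line_singular_value {F : Type} [Field F] [Fintype F] :
    lambdaInc (Fin 3 → F) {ℓ : AffineSubspace F (Fin 3 → F) // IsLine F 3 ℓ}
      (fun x ℓ => x ∈ ℓ.1) ≤ 2 / Real.sqrt (Fintype.card F) := by
  classical
  set q : ℕ := Fintype.card F with hq
  have hq2 : 2 ≤ q := Fintype.one_lt_card
  have hq0 : (0 : ℝ) < q := by exact_mod_cast Nat.lt_of_lt_of_le Nat.zero_lt_two hq2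
  set dr : ℝ := (q : ℝ) ^ 2 + q + 1 with hdr
  have hdr0 : 0 < dr := by positivity
  have hcardV : (Fintype.card (Fin 3 → F) : ℝ) = (q : ℝ) ^ 3 := by
    simp [hq]
  have hcardL : (Fintype.card {ℓ : AffineSubspace F (Fin 3 → F) // IsLine F 3 ℓ} : ℝ) =
      (q : ℝ) ^ 2 * dr := by
    rw [card_lines]; push_cast [hdr, hq]; ring
  set t : ℝ := 1 / Real.sqrt (dr * q) with ht
  set s : ℝ := 1 / Real.sqrt ((q : ℝ) ^ 3 * ((q : ℝ) ^ 2 * dr)) with hs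
  set M : Matrix (Fin 3 → F) {ℓ : AffineSubspace F (Fin 3 → F) // IsLine F 3 ℓ} ℝ :=
    Matrix.of fun x ℓ => (if x ∈ ℓ.1 then t else 0) - s with hM
  have hlam : lambdaInc (Fin 3 → F) {ℓ : AffineSubspace F (Fin 3 → F) // IsLine F 3 ℓ}
      (fun x ℓ => x ∈ ℓ.1) = ‖M‖ := by
    have hM0 : (Matrix.of fun (a : Fin 3 → F)
        (b : {ℓ : AffineSubspace F (Fin 3 → F) // IsLine F 3 ℓ}) =>
        (if a ∈ b.1 then 1 / Real.sqrt
          ((Nat.card {b' : {ℓ : AffineSubspace F (Fin 3 → F) // IsLine F 3 ℓ} //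
              a ∈ b'.1} : ℝ) * (Nat.card {a' : Fin 3 → F // a' ∈ b.1} : ℝ)) else 0)
          - 1 / Real.sqrt ((Fintype.card (Fin 3 → F) : ℝ) *
            (Fintype.card {ℓ : AffineSubspace F (Fin 3 → F) // IsLine F 3 ℓ} : ℝ))) = M := by
      ext x ℓ
      have h1 : (Nat.card {ℓ' : {ℓ : AffineSubspace F (Fin 3 → F) // IsLine F 3 ℓ} //
        x ∈ ℓ'.1} : ℝ) = dr := by rw [lines_through]; push_cast [hdr, hq]; ring
      have h2 : (Nat.card {x' : Fin 3 → F // x' ∈ ℓ.1} : ℝ) = (q : ℝ) := by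
        rw [line_card ℓ.1 ℓ.2]
      simp only [Matrix.of_apply, hM, ht, hs, h1, h2, hcardV, hcardL]
    rw [lambdaInc, hM0]
    rfl
  rw [hlam]
  -- basic squared values
  have hdq : (0:ℝ) ≤ dr * q := by positivity
  have ht2 : t * t = 1 / (dr * q) := by
    rw [ht, div_mul_div_comm, one_mul, Real.mul_self_sqrt hdq]
  have hst : s * t = 1 / (dr * (q : ℝ) ^ 3) := by
    rw [hs, ht, div_mul_div_comm, one_mul, ← Real.sqrt_mul (by positivity)]
    rw [show (q : ℝ) ^ 3 * ((q : ℝ) ^ 2 * dr) * (dr * q) = (dr * (q : ℝ) ^ 3) ^ 2 by ring]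
    rw [Real.sqrt_sq (by positivity)]
  have hs2 : s * s = 1 / ((q : ℝ) ^ 3 * ((q : ℝ) ^ 2 * dr)) := by
    rw [hs, div_mul_div_comm, one_mul, Real.mul_self_sqrt (by positivity)]
  -- the Gram matrix
  set al : ℝ := ((q : ℝ) + 1) / dr with hal
  set be : ℝ := ((q : ℝ) + 1) / ((q : ℝ) ^ 3 * dr) with hbe
  set J : Matrix (Fin 3 → F) (Fin 3 → F) ℝ := Matrix.of fun _ _ => (1 : ℝ) with hJ
  have hP : M * Mᴴ = al • (1 : Matrix (Fin 3 → F) (Fin 3 → F) ℝ) - be • J := by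
    ext x y
    rw [Matrix.mul_apply]
    have hsummand : ∀ ℓ : {ℓ : AffineSubspace F (Fin 3 → F) // IsLine F 3 ℓ},
        M x ℓ * Mᴴ ℓ y = (if x ∈ ℓ.1 ∧ y ∈ ℓ.1 then t * t else 0)
          - (if x ∈ ℓ.1 then s * t else 0) - (if y ∈ ℓ.1 then s * t else 0) + s * s := by
      intro ℓ
      rw [Matrix.conjTranspose_apply, star_trivial]
      simp only [hM, Matrix.of_apply]
      by_cases h1 : x ∈ ℓ.1 <;> by_cases h2 : y ∈ ℓ.1 <;> simp [h1, h2] <;> ring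
    rw [Finset.sum_congr rfl fun ℓ _ => hsummand ℓ]
    rw [Finset.sum_add_distrib, Finset.sum_sub_distrib, Finset.sum_sub_distrib]
    rw [sum_ite_real, sum_ite_real, sum_ite_real, Finset.sum_const, Finset.card_univ,
      nsmul_eq_mul]
    have hx : (Nat.card {ℓ : {ℓ : AffineSubspace F (Fin 3 → F) // IsLine F 3 ℓ} //
        x ∈ ℓ.1} : ℝ) = dr := by rw [lines_through]; push_cast [hdr, hq]; ring
    have hy : (Nat.card {ℓ : {ℓ : AffineSubspace F (Fin 3 → F) // IsLine F 3 ℓ} //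
        y ∈ ℓ.1} : ℝ) = dr := by rw [lines_through]; push_cast [hdr, hq]; ring
    rw [hx, hy, hcardL, ht2, hst, hs2]
    simp only [Matrix.sub_apply, Matrix.smul_apply, Matrix.one_apply, hJ, Matrix.of_apply,
      smul_eq_mul]
    by_cases hxy : x = y
    · have : (Nat.card {ℓ : {ℓ : AffineSubspace F (Fin 3 → F) // IsLine F 3 ℓ} //
          x ∈ ℓ.1 ∧ y ∈ ℓ.1} : ℝ) = dr := by
        subst hxy
        have : Nat.card {ℓ : {ℓ : AffineSubspace F (Fin 3 → F) // IsLine F 3 ℓ} //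
            x ∈ ℓ.1 ∧ x ∈ ℓ.1} = Nat.card {ℓ : {ℓ : AffineSubspace F (Fin 3 → F) //
            IsLine F 3 ℓ} // x ∈ ℓ.1} := Nat.card_congr (Equiv.subtypeEquivRight (by tauto))
        rw [this, lines_through]; push_cast [hdr, hq]; ring
      rw [this, if_pos hxy, hal, hbe]
      field_simp
      ring
    · have : (Nat.card {ℓ : {ℓ : AffineSubspace F (Fin 3 → F) // IsLine F 3 ℓ} //
          x ∈ ℓ.1 ∧ y ∈ ℓ.1} : ℝ) = 1 := by
        rw [nat_card_one _ (unique_line hxy)]; norm_num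
      rw [this, if_neg hxy, hal, hbe]
      field_simp
      ring
  -- norm bound on the Gram matrix
  have hal0 : 0 ≤ al := by positivity
  have hbe0 : 0 ≤ be := by positivity
  have hJle : ‖J‖ ≤ (q : ℝ) ^ 3 := by
    rw [hJ, ← hcardV]
    exact norm_J_le (Fin 3 → F)
  have hPnorm : ‖M * Mᴴ‖ ≤ al + be * (q : ℝ) ^ 3 := by
    rw [hP]
    calc ‖al • (1 : Matrix (Fin 3 → F) (Fin 3 → F) ℝ) - be • J‖
        ≤ ‖al • (1 : Matrix (Fin 3 → F) (Fin 3 → F) ℝ)‖ + ‖be • J‖ := norm_sub_le _ _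
      _ = al * ‖(1 : Matrix (Fin 3 → F) (Fin 3 → F) ℝ)‖ + be * ‖J‖ := by
          rw [norm_smul, norm_smul, Real.norm_of_nonneg hal0, Real.norm_of_nonneg hbe0]
      _ ≤ al * 1 + be * ((q : ℝ) ^ 3) := by
          rw [norm_one_matrix]
          exact add_le_add le_rfl (mul_le_mul_of_nonneg_left hJle hbe0)
      _ = al + be * (q : ℝ) ^ 3 := by ring
  have hsq : ‖M‖ * ‖M‖ ≤ 4 / q := by
    have h1 : ‖M‖ * ‖M‖ = ‖M * Mᴴ‖ := by
      conv_lhs => rw [← Matrix.l2_opNorm_conjTranspose M]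
      rw [← Matrix.l2_opNorm_conjTranspose_mul_self Mᴴ, Matrix.conjTranspose_conjTranspose]
    rw [h1]
    refine hPnorm.trans ?_
    have heq : al + be * (q : ℝ) ^ 3 = 2 * ((q : ℝ) + 1) / dr := by
      rw [hal, hbe]
      field_simp
      ring
    rw [heq, hdr, div_le_div_iff₀ (by positivity) hq0]
    nlinarith [hq0]
  have hfin : ‖M‖ ≤ 2 / Real.sqrt q := by
    have h2 : ‖M‖ = Real.sqrt (‖M‖ * ‖M‖) := (Real.sqrt_mul_self (norm_nonneg M)).symm
    rw [h2]
    refine (Real.sqrt_le_sqrt hsq).trans ?_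
    rw [show (4 : ℝ) / q = (2 / Real.sqrt q) ^ 2 by
      rw [div_pow, Real.sq_sqrt hq0.le]; norm_num]
    rw [Real.sqrt_sq (by positivity)]
  exact hfin
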